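/- For any finite poset P and distinct elements p, p' ∈ P, the piecewise-linear toggles τ_p and τ_{p'} on the order polytope O(P) commute if and only if p and p' do not share a cover relation in P (i.e., neither p⋖p' nor p'⋖p). -/

import Mathlib

open scoped Classical

/-- The poset `V` on `{A, B, C}` with cover relations `A ⋖ B` and `A ⋖ C`. -/
inductive V : Type
  | A | B | C
deriving DecidableEq

instance : Fintype V where
  elems := {V.A, V.B, V.C}
  complete x := by cases x <;> simp

instance : PartialOrder V where
  le x y := x = y ∨ x = V.A
  le_refl x := Or.inl rfl
  le_trans x y z h1 h2 := by
    rcases h1 with rfl | rfl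
    · exact h2
    · exact Or.inr rfl
  le_antisymm x y h1 h2 := by
    rcases h1 with rfl | rfl
    · rfl
    · rcases h2 with rfl | rfl <;> rfl

/-- Membership in the order polytope `O(P)`: order-preserving maps `P → [0,1]`. -/
def IsOP {P : Type*} [PartialOrder P] (f : P → ℝ) : Prop :=
  Monotone f ∧ ∀ x, 0 ≤ f x ∧ f x ≤ 1

/-- The piecewise-linear toggle `τ_p` on the order polytope: the value at `p` is replaced by
`min{f(r) : p ⋖ r in P̂} + max{f(r) : r ⋖ p in P̂} − f(p)`, where `P̂ = P ∪ {0̂, 1̂}` with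
`f(0̂) = 0` and `f(1̂) = 1` (so `1` resp. `0` are included in the min resp. max). -/
noncomputable def pwlToggle {P : Type*} [PartialOrder P] (p : P) (f : P → ℝ) : P → ℝ :=
  fun x =>
    if x = p then
      sInf ({1} ∪ f '' {r | p ⋖ r}) + sSup ({0} ∪ f '' {r | r ⋖ p}) - f p
    else f x

/-- `L` lists the elements of the poset in the order of a linear extension. -/
def IsLinExt {P : Type*} [PartialOrder P] (L : List P) : Prop :=
  L.Nodup ∧ (∀ x, x ∈ L) ∧ ∀ i j : Fin L.length, L.get i < L.get j → i < j

/-- Piecewise-linear rowmotion `row = τ_{p_1} ∘ τ_{p_2} ∘ ⋯ ∘ τ_{p_m}` for a linear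
extension `(p_1, …, p_m)`. -/
noncomputable def pwlRow {P : Type*} [PartialOrder P] (L : List P) (f : P → ℝ) : P → ℝ :=
  L.foldr pwlToggle f

/-- The automorphism of `V` fixing `A` and swapping `B` and `C`. -/
def Vflip : V → V
  | V.A => V.A
  | V.B => V.C
  | V.C => V.B

/-!
The new value `τ_p f (p)` only reads `f` at `p` and at the elements sharing a cover relation with
`p`, and `τ_p` changes nothing else; so toggles at two elements that are not adjacent in the Hasse
diagram commute. Conversely, if `p ⋖ q`, take for `f` the indicator of the principal up-set of `p`:
`τ_p` turns it into the indicator of the strict up-set, which lowers the maximum over the lower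
covers of `q` from `1` to `0`, so `τ_q ∘ τ_p` and `τ_p ∘ τ_q` differ at `q`.
-/

lemma csInf_singleton_union_of_le {α : Type*} [ConditionallyCompleteLattice α] {a : α}
    {s : Set α} (h : ∀ x ∈ s, a ≤ x) : sInf ({a} ∪ s) = a :=
  IsLeast.csInf_eq ⟨Or.inl rfl, by rintro x (rfl | hx); exacts [le_rfl, h x hx]⟩

lemma csSup_singleton_union_of_le {α : Type*} [ConditionallyCompleteLattice α] {a : α}
    {s : Set α} (h : ∀ x ∈ s, x ≤ a) : sSup ({a} ∪ s) = a :=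
  csInf_singleton_union_of_le (α := αᵒᵈ) h

lemma Set.indicator_one_mem_Icc {α M : Type*} [Zero M] [One M] [Preorder M] [ZeroLEOneClass M]
    (s : Set α) (x : α) : s.indicator (1 : α → M) x ∈ Set.Icc 0 1 := by
  by_cases hx : x ∈ s <;> simp [hx]

lemma IsUpperSet.monotone_indicator_one {α M : Type*} [Preorder α] [Zero M] [One M] [Preorder M]
    [ZeroLEOneClass M] {s : Set α} (hs : IsUpperSet s) : Monotone (s.indicator (1 : α → M)) := by
  intro x y hxy
  by_cases hx : x ∈ s
  · simp [hx, hs hxy hx]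
  · simpa [hx] using (s.indicator_one_mem_Icc y).1

lemma isOP_indicator_one_Ici {P : Type*} [PartialOrder P] (p : P) :
    IsOP ((Set.Ici p).indicator 1) :=
  ⟨isUpperSet_Ici p |>.monotone_indicator_one, (Set.Ici p).indicator_one_mem_Icc⟩

section pwlToggle

variable {P : Type*} [PartialOrder P]

lemma pwlToggle_apply_of_ne (p : P) (f : P → ℝ) {x : P} (h : x ≠ p) : pwlToggle p f x = f x :=
  if_neg h

lemma pwlToggle_apply_self (p : P) (f : P → ℝ) :
    pwlToggle p f p = sInf ({1} ∪ f '' {r | p ⋖ r}) + sSup ({0} ∪ f '' {r | r ⋖ p}) - f p :=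
  if_pos rfl

lemma pwlToggle_eq_update (p : P) (f : P → ℝ) :
    pwlToggle p f = Function.update f p (pwlToggle p f p) := by
  funext x
  by_cases hx : x = p
  · subst hx; simp
  · simp [Function.update_of_ne hx, pwlToggle_apply_of_ne p f hx]

lemma pwlToggle_apply_self_congr {p : P} {f g : P → ℝ} (hp : f p = g p)
    (hup : ∀ r, p ⋖ r → f r = g r) (hdown : ∀ r, r ⋖ p → f r = g r) :
    pwlToggle p f p = pwlToggle p g p := by
  rw [pwlToggle_apply_self, pwlToggle_apply_self, Set.image_congr (s := {r | p ⋖ r}) hup,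
    Set.image_congr (s := {r | r ⋖ p}) hdown, hp]

lemma pwlToggle_apply_self_pwlToggle_of_not_covBy {p q : P} (hne : p ≠ q) (hpq : ¬p ⋖ q)
    (hqp : ¬q ⋖ p) (f : P → ℝ) : pwlToggle p (pwlToggle q f) p = pwlToggle p f p :=
  pwlToggle_apply_self_congr (pwlToggle_apply_of_ne q f hne)
    (fun r hr => pwlToggle_apply_of_ne q f (by rintro rfl; exact hpq hr))
    (fun r hr => pwlToggle_apply_of_ne q f (by rintro rfl; exact hqp hr))

theorem pwlToggle_comm_of_not_covBy {p q : P} (h : ¬(p ⋖ q ∨ q ⋖ p)) (f : P → ℝ) :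
    pwlToggle p (pwlToggle q f) = pwlToggle q (pwlToggle p f) := by
  obtain rfl | hne := eq_or_ne p q
  · rfl
  push Not at h
  rw [pwlToggle_eq_update p (pwlToggle q f), pwlToggle_eq_update q (pwlToggle p f),
    pwlToggle_apply_self_pwlToggle_of_not_covBy hne h.1 h.2,
    pwlToggle_apply_self_pwlToggle_of_not_covBy hne.symm h.2 h.1,
    pwlToggle_eq_update p f, pwlToggle_eq_update q f]
  simp only [Function.update_self, Function.update_comm hne]

lemma pwlToggle_apply_self_of_eq_one {p : P} {f : P → ℝ} (hp : f p = 1)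
    (hup : ∀ r, p ⋖ r → 1 ≤ f r) :
    pwlToggle p f p = sSup ({0} ∪ f '' {r | r ⋖ p}) := by
  rw [pwlToggle_apply_self,
    csInf_singleton_union_of_le (Set.forall_mem_image (s := {r | p ⋖ r}) |>.2 hup), hp]
  ring

lemma pwlToggle_indicator_one_Ici_self (p : P) :
    pwlToggle p ((Set.Ici p).indicator 1) = (Set.Ioi p).indicator 1 := by
  funext x
  obtain rfl | hx := eq_or_ne x p
  · rw [pwlToggle_apply_self_of_eq_one (by simp) fun r hr => by simp [hr.le]]
    refine (csSup_singleton_union_of_le <| Set.forall_mem_image.2 fun r hr => ?_).trans (by simp)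
    simp [hr.lt.not_ge]
  · rw [pwlToggle_apply_of_ne p _ hx]
    by_cases hpx : p ≤ x
    · simp [hpx, lt_of_le_of_ne hpx hx.symm]
    · simp [hpx, mt le_of_lt hpx]

lemma pwlToggle_pwlToggle_indicator_one_Ici_apply_ne_of_covBy {p q : P} (hpq : p ⋖ q) :
    pwlToggle q (pwlToggle p ((Set.Ici p).indicator 1)) q ≠
      pwlToggle p (pwlToggle q ((Set.Ici p).indicator 1)) q := by
  have hup : ∀ r, q ⋖ r → p < r := fun r hr => hpq.lt.trans hr.lt
  have hIoi : pwlToggle q ((Set.Ioi p).indicator 1) q = 0 := by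
    rw [pwlToggle_apply_self_of_eq_one (by simp [hpq.lt]) fun r hr => by simp [hup r hr]]
    refine (csSup_singleton_union_of_le <| Set.forall_mem_image.2 fun r hr => ?_).trans (by simp)
    exact (Set.indicator_of_notMem (fun hpr => hpq.2 hpr hr.lt) _).le
  have hIci : pwlToggle q ((Set.Ici p).indicator 1) q = 1 := by
    rw [pwlToggle_apply_self_of_eq_one (by simp [hpq.le]) fun r hr => by simp [(hup r hr).le]]
    refine IsGreatest.csSup_eq ⟨Or.inr ⟨p, hpq, by simp⟩, ?_⟩
    rintro _ (rfl | ⟨r, -, rfl⟩)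
    exacts [zero_le_one, ((Set.Ici p).indicator_one_mem_Icc r).2]
  rw [pwlToggle_indicator_one_Ici_self, hIoi, pwlToggle_apply_of_ne p _ hpq.ne', hIci]
  exact zero_ne_one

end pwlToggle

theorem stmt13_general (P : Type*) [PartialOrder P] (p p' : P) :
    (∀ f : P → ℝ, IsOP f →
        pwlToggle p (pwlToggle p' f) = pwlToggle p' (pwlToggle p f)) ↔
      ¬(p ⋖ p' ∨ p' ⋖ p) := by
  refine ⟨fun hcomm => ?_, fun h f _ => pwlToggle_comm_of_not_covBy h f⟩
  rintro (hpp' | hp'p)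
  · exact pwlToggle_pwlToggle_indicator_one_Ici_apply_ne_of_covBy hpp'
      (congrFun (hcomm _ (isOP_indicator_one_Ici p)) p').symm
  · exact pwlToggle_pwlToggle_indicator_one_Ici_apply_ne_of_covBy hp'p
      (congrFun (hcomm _ (isOP_indicator_one_Ici p')) p)

/-- For distinct `p, p'` in a finite poset `P`, the piecewise-linear toggles `τ_p` and
`τ_{p'}` commute on `O(P)` if and only if `p` and `p'` do not share a cover relation. -/
theorem stmt13 (P : Type*) [PartialOrder P] [Fintype P] (p p' : P) (hne : p ≠ p') :
    (∀ f : P → ℝ, IsOP f →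
        pwlToggle p (pwlToggle p' f) = pwlToggle p' (pwlToggle p f)) ↔
      ¬(p ⋖ p' ∨ p' ⋖ p) :=
  stmt13_general P p p'
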